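/- Let f : ℝⁿ → ℝ ∪ {+∞} be proper, lower semicontinuous, and convex, and let P be symmetric positive definite. Then for all x ∈ ℝⁿ, prox_{f*,P}(x) = x − P⁻¹ · prox_{f,P⁻¹}(P x), where f* denotes the convex (Fenchel) conjugate of f. -/

import Mathlib

open Matrix

noncomputable section

def ERealConvexOn {E : Type*} [AddCommGroup E] [Module ℝ E] (f : E → EReal) : Prop :=
  ∀ u v : E, ∀ a b : ℝ, 0 ≤ a → 0 ≤ b → a + b = 1 →
    f (a • u + b • v) ≤ (a : EReal) * f u + (b : EReal) * f v

def ERealProper {E : Type*} (f : E → EReal) : Prop :=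
  (∀ x, f x ≠ ⊥) ∧ (∃ x, f x ≠ ⊤)

/-- `½‖u − z‖²_P`. -/
def quadP {n : ℕ} (P : Matrix (Fin n) (Fin n) ℝ) (z u : Fin n → ℝ) : ℝ :=
  (1 / 2) * ((u - z) ⬝ᵥ (P *ᵥ (u - z)))

/-- `u = prox_{f,P}(z)`, i.e. `u` minimizes `f(·) + ½‖· − z‖²_P`. -/
def IsProx {n : ℕ} (f : (Fin n → ℝ) → EReal) (P : Matrix (Fin n) (Fin n) ℝ)
    (z u : Fin n → ℝ) : Prop :=
  ∀ v : Fin n → ℝ, f u + ((quadP P z u : ℝ) : EReal) ≤ f v + ((quadP P z v : ℝ) : EReal)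

/-- The convex (Fenchel) conjugate `f*(y) = sup_x (⟨x,y⟩ − f(x))`. -/
def econj {n : ℕ} (f : (Fin n → ℝ) → EReal) (y : Fin n → ℝ) : EReal :=
  ⨆ x : Fin n → ℝ, (((x ⬝ᵥ y : ℝ)) : EReal) - f x

/-! The first-order optimality condition for `v = prox_{f,P⁻¹}(Px)`, obtained by comparing `v`
with `v + t • (w - v)` and letting `t → 0`, says that `w₀ = x - P⁻¹ v` is a subgradient of `f`
at `v`. Hence the affine function `y ↦ ⟨v, y⟩ - f v` minorizes `f*` and touches it at `w₀`
(Fenchel–Young). As `P (x - w₀) = v`, this affine function plus `½‖· - x‖²_P` exceeds its value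
at `w₀` by exactly `½‖· - w₀‖²_P`, so every minimizer of `f* + ½‖· - x‖²_P` equals `w₀`. -/

lemma Matrix.IsSymm.dotProduct_mulVec_comm {m R : Type*} [Fintype m] [CommSemiring R]
    {Q : Matrix m m R} (hQ : Q.IsSymm) (a b : m → R) : a ⬝ᵥ Q *ᵥ b = b ⬝ᵥ Q *ᵥ a := by
  rw [dotProduct_mulVec, ← mulVec_transpose, dotProduct_comm, hQ.eq]

lemma quadP_add {n : ℕ} {Q : Matrix (Fin n) (Fin n) ℝ} (hQ : Q.IsSymm) (z y d : Fin n → ℝ) :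
    quadP Q z (y + d) = quadP Q z y + d ⬝ᵥ Q *ᵥ (y - z) + (1 / 2) * (d ⬝ᵥ Q *ᵥ d) := by
  have hyz : y + d - z = (y - z) + d := by abel
  simp only [quadP, hyz, mulVec_add, dotProduct_add, add_dotProduct]
  rw [hQ.dotProduct_mulVec_comm (y - z) d]
  ring

lemma le_of_forall_le_add_mul {a b c : ℝ} (h : ∀ t : ℝ, 0 < t → t ≤ 1 → a ≤ b + t * c) :
    a ≤ b := by
  have hlim : Filter.Tendsto (fun t : ℝ => b + t * c) (nhdsWithin 0 (Set.Ioi 0)) (nhds b) := by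
    have : Continuous (fun t : ℝ => b + t * c) := by fun_prop
    simpa using (this.tendsto 0).mono_left nhdsWithin_le_nhds
  refine ge_of_tendsto hlim ?_
  filter_upwards [Ioc_mem_nhdsGT (zero_lt_one' ℝ)] with t ht using h t ht.1 ht.2

lemma IsProx.ne_top {n : ℕ} {f : (Fin n → ℝ) → EReal} {Q : Matrix (Fin n) (Fin n) ℝ}
    {z v : Fin n → ℝ} (hf : ERealProper f) (hv : IsProx f Q z v) : f v ≠ ⊤ := by
  obtain ⟨w, hw⟩ := hf.2
  intro hv_top
  have := hv w
  rw [hv_top, EReal.top_add_coe, top_le_iff, ← EReal.coe_toReal hw (hf.1 w),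
    ← EReal.coe_add] at this
  exact EReal.coe_ne_top _ this

lemma ERealConvexOn.le_add_smul_sub {E : Type*} [AddCommGroup E] [Module ℝ E] {f : E → EReal}
    (hf : ERealConvexOn f) {v w : E} {r s : ℝ} (hv : f v = r) (hw : f w = s) {t : ℝ}
    (ht₀ : 0 ≤ t) (ht₁ : t ≤ 1) : f (v + t • (w - v)) ≤ ((1 - t) * r + t * s : ℝ) := by
  have hvw : v + t • (w - v) = (1 - t) • v + t • w := by module
  rw [hvw, EReal.coe_add, EReal.coe_mul, EReal.coe_mul, ← hv, ← hw]
  exact hf v w (1 - t) t (by linarith) ht₀ (by ring)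

lemma IsProx.coe_add_dotProduct_le {n : ℕ} {f : (Fin n → ℝ) → EReal}
    {Q : Matrix (Fin n) (Fin n) ℝ} {z v : Fin n → ℝ} {r : ℝ}
    (hbot : ∀ x, f x ≠ ⊥) (hconv : ERealConvexOn f) (hQ : Q.IsSymm) (hv : IsProx f Q z v)
    (hr : f v = r) (w : Fin n → ℝ) : ((r + (w - v) ⬝ᵥ Q *ᵥ (z - v) : ℝ) : EReal) ≤ f w := by
  by_cases hw_top : f w = ⊤
  · simp [hw_top]
  set s := (f w).toReal
  have hs : f w = s := (EReal.coe_toReal hw_top (hbot w)).symm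
  set d := w - v
  have hzv : d ⬝ᵥ Q *ᵥ (z - v) = -(d ⬝ᵥ Q *ᵥ (v - z)) := by
    rw [← dotProduct_neg, ← mulVec_neg, neg_sub]
  rw [hs, EReal.coe_le_coe_iff, hzv]
  suffices r ≤ s + d ⬝ᵥ Q *ᵥ (v - z) by linarith
  refine le_of_forall_le_add_mul (c := (1 / 2) * (d ⬝ᵥ Q *ᵥ d)) fun t ht₀ ht₁ => ?_
  have hmin := (hv (v + t • d)).trans
    (add_le_add_left (hconv.le_add_smul_sub hr hs ht₀.le ht₁) _)
  rw [hr, ← EReal.coe_add, ← EReal.coe_add, EReal.coe_le_coe_iff, quadP_add hQ] at hmin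
  simp only [mulVec_smul, smul_dotProduct, dotProduct_smul, smul_eq_mul] at hmin
  have : t * r ≤ t * (s + d ⬝ᵥ Q *ᵥ (v - z) + t * ((1 / 2) * (d ⬝ᵥ Q *ᵥ d))) := by linarith
  exact le_of_mul_le_mul_left this ht₀

lemma coe_dotProduct_sub_le_econj {n : ℕ} (f : (Fin n → ℝ) → EReal) {v : Fin n → ℝ} {r : ℝ}
    (hr : f v = r) (y : Fin n → ℝ) : ((v ⬝ᵥ y - r : ℝ) : EReal) ≤ econj f y := by
  rw [EReal.coe_sub, ← hr]
  exact le_iSup (fun w => ((w ⬝ᵥ y : ℝ) : EReal) - f w) v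

lemma econj_eq_of_coe_add_dotProduct_le {n : ℕ} {f : (Fin n → ℝ) → EReal} {v y : Fin n → ℝ}
    {r : ℝ} (hr : f v = r) (hy : ∀ w, ((r + (w - v) ⬝ᵥ y : ℝ) : EReal) ≤ f w) :
    econj f y = ((v ⬝ᵥ y - r : ℝ) : EReal) := by
  refine le_antisymm (iSup_le fun w => ?_) ?_
  · calc ((w ⬝ᵥ y : ℝ) : EReal) - f w ≤ ((w ⬝ᵥ y : ℝ) : EReal) - ((r + (w - v) ⬝ᵥ y : ℝ) : EReal) :=
          EReal.sub_le_sub le_rfl (hy w)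
      _ = ((v ⬝ᵥ y - r : ℝ) : EReal) := by
          rw [← EReal.coe_sub, sub_dotProduct]; ring_nf
  · exact coe_dotProduct_sub_le_econj f hr y

lemma IsProx.eq_of_affine_le {n : ℕ} {g : (Fin n → ℝ) → EReal} {P : Matrix (Fin n) (Fin n) ℝ}
    (hP : P.PosDef) {x u v w₀ : Fin n → ℝ} {r : ℝ}
    (hg : ∀ y, ((v ⬝ᵥ y - r : ℝ) : EReal) ≤ g y) (hg₀ : g w₀ = ((v ⬝ᵥ w₀ - r : ℝ) : EReal))
    (hw₀ : P *ᵥ (x - w₀) = v) (hu : IsProx g P x u) : u = w₀ := by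
  have hmin : v ⬝ᵥ u + quadP P x u ≤ v ⬝ᵥ w₀ + quadP P x w₀ := by
    have := ((add_le_add_left (hg u) _).trans (hu w₀)).trans_eq (by rw [hg₀])
    rw [← EReal.coe_add, ← EReal.coe_add, EReal.coe_le_coe_iff] at this
    linarith
  have hexp := quadP_add (isHermitian_iff_isSymm.mp hP.1) x w₀ (u - w₀)
  rw [add_sub_cancel, ← neg_sub x w₀, mulVec_neg, hw₀, dotProduct_neg, dotProduct_comm _ v,
    dotProduct_sub] at hexp
  have hnonpos : (u - w₀) ⬝ᵥ P *ᵥ (u - w₀) ≤ 0 := by linarith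
  by_contra hne
  exact hnonpos.not_gt (hP.dotProduct_mulVec_pos (sub_ne_zero.mpr hne))

theorem prox_conj_decomposition_general {n : ℕ} (f : (Fin n → ℝ) → EReal)
    (hproper : ERealProper f) (hconv : ERealConvexOn f)
    (P : Matrix (Fin n) (Fin n) ℝ) (hP : P.PosDef) (x u v : Fin n → ℝ)
    (hu : IsProx (econj f) P x u)
    (hv : IsProx f P⁻¹ (P *ᵥ x) v) :
    u = x - P⁻¹ *ᵥ v := by
  have hdet : IsUnit P.det := isUnit_iff_ne_zero.mpr hP.det_pos.ne'
  obtain ⟨r, hr⟩ : ∃ r : ℝ, f v = r :=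
    ⟨_, (EReal.coe_toReal (hv.ne_top hproper) (hproper.1 v)).symm⟩
  have hsub := hv.coe_add_dotProduct_le hproper.1 hconv
    (isHermitian_iff_isSymm.mp hP.inv.1) hr
  rw [mulVec_sub, mulVec_mulVec, nonsing_inv_mul P hdet, one_mulVec] at hsub
  refine hu.eq_of_affine_le hP (coe_dotProduct_sub_le_econj f hr)
    (econj_eq_of_coe_add_dotProduct_le hr hsub) ?_
  rw [sub_sub_cancel, mulVec_mulVec, mul_nonsing_inv P hdet, one_mulVec]

/-- Generalized Moreau decomposition: `prox_{f*,P}(x) = x − P⁻¹ prox_{f,P⁻¹}(Px)`. -/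
theorem prox_conj_decomposition {n : ℕ} (f : (Fin n → ℝ) → EReal)
    (hproper : ERealProper f) (hlsc : LowerSemicontinuous f) (hconv : ERealConvexOn f)
    (P : Matrix (Fin n) (Fin n) ℝ) (hP : P.PosDef) (x u v : Fin n → ℝ)
    (hu : IsProx (econj f) P x u)
    (hv : IsProx f P⁻¹ (P *ᵥ x) v) :
    u = x - P⁻¹ *ᵥ v :=
  prox_conj_decomposition_general f hproper hconv P hP x u v hu hv
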